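/- For density operators ρ, σ on a finite-dimensional Hilbert space, F(ρ,σ)² + D_tr(ρ,σ)² ≤ 1, i.e. F(ρ,σ) ≤ √(1 − D_tr(ρ,σ)²). -/

import Mathlib

open Matrix Kronecker
open scoped ComplexOrder
noncomputable section

open scoped Classical in
/-- total matrix square root: the PSD square root when `M` is PSD, else `0`. -/
def matSqrt {n : Type*} [Fintype n] [DecidableEq n] (M : Matrix n n ℂ) : Matrix n n ℂ :=
  if h : M.PosSemidef then
    (h.1.eigenvectorUnitary : Matrix n n ℂ) * diagonal ((↑) ∘ Real.sqrt ∘ h.1.eigenvalues) *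
      (star h.1.eigenvectorUnitary : Matrix n n ℂ) else 0

/-- trace (Schatten-1) norm `Tr √(MᴴM)`. -/
def traceNorm {n : Type*} [Fintype n] [DecidableEq n] (M : Matrix n n ℂ) : ℝ :=
  (matSqrt (Mᴴ * M)).trace.re

/-- trace distance. -/
def traceDist {n : Type*} [Fintype n] [DecidableEq n] (ρ σ : Matrix n n ℂ) : ℝ :=
  traceNorm (ρ - σ) / 2

/-- fidelity `‖√ρ√σ‖₁`. -/
def fidelity {n : Type*} [Fintype n] [DecidableEq n] (ρ σ : Matrix n n ℂ) : ℝ :=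
  traceNorm (matSqrt ρ * matSqrt σ)

/-- partial trace over the first tensor factor. -/
def trFst {a b : Type*} [Fintype a] (M : Matrix (a × b) (a × b) ℂ) : Matrix b b ℂ :=
  Matrix.of fun i j => ∑ k, M (k, i) (k, j)

/-- partial trace over the second tensor factor. -/
def trSnd {a b : Type*} [Fintype b] (M : Matrix (a × b) (a × b) ℂ) : Matrix a a ℂ :=
  Matrix.of fun i j => ∑ k, M (i, k) (j, k)

/-- rank-one projector `|v⟩⟨v|`. -/
def outerP {n : Type*} (v : n → ℂ) : Matrix n n ℂ :=
  Matrix.of fun i j => v i * star (v j)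

/-- tensor product of vectors. -/
def vkron {a b : Type*} (v : a → ℂ) (w : b → ℂ) : a × b → ℂ :=
  fun p => v p.1 * w p.2

section Helpers

variable {n : Type*} [Fintype n] [DecidableEq n]

/-- the matrix as a Euclidean vector -/
private def matVec (X : Matrix n n ℂ) : EuclideanSpace ℂ (n × n) := WithLp.toLp 2 (fun p : n × n => X p.1 p.2)

private lemma trace_eq_inner (X Y : Matrix n n ℂ) :
    (Xᴴ * Y).trace = (inner ℂ (matVec X) (matVec Y) : ℂ) := by
  simp only [Matrix.trace, Matrix.diag, Matrix.mul_apply, conjTranspose_apply,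
    PiLp.inner_apply, RCLike.inner_apply', matVec, PiLp.toLp_apply, Fintype.sum_prod_type]
  rw [Finset.sum_comm]
  simp only [starRingEnd_apply]

private lemma norm_matVec (X : Matrix n n ℂ) :
    ‖matVec X‖ = Real.sqrt ((Xᴴ * X).trace.re) := by
  rw [EuclideanSpace.norm_eq]
  congr 1
  have : (Xᴴ * X).trace = ((∑ p : n × n, ‖X p.1 p.2‖ ^ 2 : ℝ) : ℂ) := by
    rw [trace_eq_inner]
    simp only [PiLp.inner_apply, RCLike.inner_apply', matVec, PiLp.toLp_apply]
    push_cast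
    refine Finset.sum_congr rfl fun p _ => ?_
    rw [mul_comm, Complex.mul_conj']
  rw [this, Complex.ofReal_re]
  rfl

private lemma trace_re_nonneg (X : Matrix n n ℂ) : 0 ≤ (Xᴴ * X).trace.re := by
  have h := norm_matVec X
  have h2 := Real.sqrt_nonneg ((Xᴴ * X).trace.re)
  by_contra hc
  push_neg at hc
  rw [Real.sqrt_eq_zero_of_nonpos hc.le] at h
  have : matVec X = 0 := norm_eq_zero.mp h
  have : (Xᴴ * X).trace = 0 := by rw [trace_eq_inner, this]; simp
  rw [this] at hc; simp at hc

/-- Cauchy–Schwarz for the Frobenius inner product, trace form. -/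
private lemma cs_trace (X Y : Matrix n n ℂ) :
    ‖(Xᴴ * Y).trace‖ ≤ Real.sqrt ((Xᴴ * X).trace.re) * Real.sqrt ((Yᴴ * Y).trace.re) := by
  rw [trace_eq_inner, ← norm_matVec, ← norm_matVec]
  exact norm_inner_le_norm _ _

set_option maxRecDepth 10000 in
/-- polar decomposition, trace form: `traceNorm A` is attained as `Tr (U A)` for a unitary `U`. -/
private lemma exists_unitary_polar (A : Matrix n n ℂ) :
    0 ≤ traceNorm A ∧ ∃ U : Matrix n n ℂ, Uᴴ * U = 1 ∧ (U * A).trace = (traceNorm A : ℂ) := by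
  have hP : (Aᴴ * A).PosSemidef := posSemidef_conjTranspose_mul_self A
  have hH : (Aᴴ * A).IsHermitian := hP.1
  set lam : n → ℝ := hH.eigenvalues with hlam
  have hln : ∀ i, 0 ≤ lam i := fun i => hP.eigenvalues_nonneg i
  set V : Matrix n n ℂ := (hH.eigenvectorUnitary : Matrix n n ℂ) with hVdef
  have hVu : Vᴴ * V = 1 := by
    have := Matrix.mem_unitaryGroup_iff'.mp hH.eigenvectorUnitary.2
    rwa [Matrix.star_eq_conjTranspose] at this
  have hVu' : V * Vᴴ = 1 := mul_eq_one_comm.mp hVu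
  have hspec : Aᴴ * A = V * diagonal (RCLike.ofReal ∘ lam) * Vᴴ := by
    have := hH.spectral_theorem
    rw [Unitary.conjStarAlgAut_apply] at this
    exact this
  -- the square root
  have hsqrtPSD : (V * diagonal (RCLike.ofReal ∘ Real.sqrt ∘ lam) * Vᴴ).PosSemidef := by
    apply Matrix.PosSemidef.mul_mul_conjTranspose_same
    rw [Matrix.posSemidef_diagonal_iff]
    intro i
    simp only [Function.comp_apply]
    exact RCLike.ofReal_nonneg.mpr (Real.sqrt_nonneg _)
  have hsqrt : matSqrt (Aᴴ * A) = V * diagonal (RCLike.ofReal ∘ Real.sqrt ∘ lam) * Vᴴ := by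
    rw [matSqrt, dif_pos hP]; rfl
  have _hsqrt' : V * diagonal (RCLike.ofReal ∘ Real.sqrt ∘ lam) * Vᴴ *
            (V * diagonal (RCLike.ofReal ∘ Real.sqrt ∘ lam) * Vᴴ) = Aᴴ * A := by
    calc V * diagonal (RCLike.ofReal ∘ Real.sqrt ∘ lam) * Vᴴ *
          (V * diagonal (RCLike.ofReal ∘ Real.sqrt ∘ lam) * Vᴴ)
        = V * (diagonal (RCLike.ofReal ∘ Real.sqrt ∘ lam) * (Vᴴ * V) *
            diagonal (RCLike.ofReal ∘ Real.sqrt ∘ lam)) * Vᴴ := by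
          simp only [Matrix.mul_assoc]
      _ = V * diagonal (RCLike.ofReal ∘ lam) * Vᴴ := by
          have hdd : diagonal (RCLike.ofReal ∘ Real.sqrt ∘ lam) *
              diagonal (RCLike.ofReal ∘ Real.sqrt ∘ lam) =
              (diagonal (RCLike.ofReal ∘ lam) : Matrix n n ℂ) := by
            ext i j
            rw [diagonal_mul_diagonal]
            rcases eq_or_ne i j with rfl | h
            · rw [Matrix.diagonal_apply_eq, Matrix.diagonal_apply_eq]
              simp only [Function.comp_apply]
              rw [← RCLike.ofReal_mul, Real.mul_self_sqrt (hln i)]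
            · rw [Matrix.diagonal_apply_ne _ h, Matrix.diagonal_apply_ne _ h]
          rw [hVu, Matrix.mul_one, hdd]
      _ = Aᴴ * A := hspec.symm
  have htn : traceNorm A = ∑ i, Real.sqrt (lam i) := by
    rw [traceNorm, hsqrt, Matrix.trace_mul_cycle,
      hVu, Matrix.one_mul, Matrix.trace_diagonal]
    rw [Complex.re_sum]
    refine Finset.sum_congr rfl fun i _ => ?_
    simp only [Function.comp_apply]
    exact Complex.ofReal_re _
  have htn0 : 0 ≤ traceNorm A := by
    rw [htn]; exact Finset.sum_nonneg fun i _ => Real.sqrt_nonneg _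
  refine ⟨htn0, ?_⟩
  -- Gram matrix of the columns of A * V
  have hgram : (A * V)ᴴ * (A * V) = diagonal (RCLike.ofReal ∘ lam) := by
    calc (A * V)ᴴ * (A * V) = Vᴴ * (Aᴴ * A) * V := by
          rw [conjTranspose_mul]; simp only [Matrix.mul_assoc]
      _ = Vᴴ * V * diagonal (RCLike.ofReal ∘ lam) * (Vᴴ * V) := by
          rw [hspec]; simp only [Matrix.mul_assoc]
      _ = diagonal (RCLike.ofReal ∘ lam) := by rw [hVu]; simp
  set b : n → EuclideanSpace ℂ n := fun i => WithLp.toLp 2 (fun k => (A * V) k i) with hb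
  have hinner : ∀ i j, (inner ℂ (b i) (b j) : ℂ) = if i = j then (lam i : ℂ) else 0 := by
    intro i j
    have : (inner ℂ (b i) (b j) : ℂ) = ((A * V)ᴴ * (A * V)) i j := by
      simp only [PiLp.inner_apply, RCLike.inner_apply', starRingEnd_apply, hb, PiLp.toLp_apply,
        Matrix.mul_apply, Matrix.conjTranspose_apply]
    rw [this, hgram, Matrix.diagonal_apply]
    rcases eq_or_ne i j with rfl | h
    · rw [if_pos rfl, if_pos rfl]
      rfl
    · rw [if_neg h, if_neg h]
  set s : Set n := {i | lam i ≠ 0} with hs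
  set v : n → EuclideanSpace ℂ n := fun i => (((Real.sqrt (lam i))⁻¹ : ℝ) : ℂ) • b i with hv
  have hvon : Orthonormal ℂ (s.restrict v) := by
    rw [orthonormal_iff_ite]
    rintro ⟨i, hi⟩ ⟨j, hj⟩
    simp only [Set.restrict, Set.domRestrict, hv]
    rw [inner_smul_left, inner_smul_right, hinner]
    rcases eq_or_ne i j with rfl | hij
    · rw [if_pos rfl, if_pos rfl, Complex.conj_ofReal]
      have hlp : 0 < lam i := lt_of_le_of_ne (hln i) (Ne.symm hi)
      have h3 : Real.sqrt (lam i) * Real.sqrt (lam i) = lam i := Real.mul_self_sqrt (hln i)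
      have h2 : Real.sqrt (lam i) ≠ 0 := ne_of_gt (Real.sqrt_pos.mpr hlp)
      have hr : (Real.sqrt (lam i))⁻¹ * ((Real.sqrt (lam i))⁻¹ * lam i) = 1 := by
        field_simp
        try linarith [h3]
      rw [← Complex.ofReal_mul, ← Complex.ofReal_mul, hr, Complex.ofReal_one]
    · have hne : (⟨i, hi⟩ : ↥s) ≠ ⟨j, hj⟩ := fun h => hij (congrArg Subtype.val h)
      rw [if_neg hij, if_neg hne, mul_zero, mul_zero]
  obtain ⟨β, hβ⟩ := hvon.exists_orthonormalBasis_extension_of_card_eq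
    (by simp [finrank_euclideanSpace])
  set U₀ : Matrix n n ℂ := Matrix.of (fun k i => (β i : EuclideanSpace ℂ n) k) with hU₀def
  have hU₀ : U₀ᴴ * U₀ = 1 := by
    ext i j
    have h := orthonormal_iff_ite.mp β.orthonormal i j
    simp only [PiLp.inner_apply, RCLike.inner_apply', starRingEnd_apply] at h
    simp only [Matrix.mul_apply, conjTranspose_apply, hU₀def, Matrix.of_apply, Matrix.one_apply]
    exact h
  have hU₀' : U₀ * U₀ᴴ = 1 := mul_eq_one_comm.mp hU₀
  refine ⟨V * U₀ᴴ, ?_, ?_⟩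
  · rw [conjTranspose_mul, conjTranspose_conjTranspose, Matrix.mul_assoc,
      ← Matrix.mul_assoc Vᴴ, hVu, Matrix.one_mul]
    exact hU₀'
  · have hterm : ∀ i, (inner ℂ (β i) (b i) : ℂ) = (Real.sqrt (lam i) : ℂ) := by
      intro i
      by_cases hi : lam i ≠ 0
      · rw [hβ i hi]
        simp only [hv]
        rw [inner_smul_left, hinner, if_pos rfl, Complex.conj_ofReal]
        have hlp : 0 < lam i := lt_of_le_of_ne (hln i) (Ne.symm hi)
        have h3 : Real.sqrt (lam i) * Real.sqrt (lam i) = lam i := Real.mul_self_sqrt (hln i)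
        have h2 : Real.sqrt (lam i) ≠ 0 := ne_of_gt (Real.sqrt_pos.mpr hlp)
        have hr : (Real.sqrt (lam i))⁻¹ * lam i = Real.sqrt (lam i) := by
          field_simp
          try linarith [h3]
        rw [← Complex.ofReal_mul, hr]
      · push_neg at hi
        have : (inner ℂ (b i) (b i) : ℂ) = 0 := by rw [hinner, if_pos rfl, hi]; simp
        have hb0 : b i = 0 := inner_self_eq_zero.mp this
        rw [hb0, inner_zero_right, hi]
        simp
    have : (V * U₀ᴴ * A).trace = (U₀ᴴ * (A * V)).trace := by
      rw [Matrix.trace_mul_cycle, Matrix.trace_mul_comm]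
    rw [this]
    have : (U₀ᴴ * (A * V)).trace = ∑ i, (inner ℂ (β i) (b i) : ℂ) := by
      simp only [Matrix.trace, Matrix.diag, Matrix.mul_apply, conjTranspose_apply,
        PiLp.inner_apply, RCLike.inner_apply', starRingEnd_apply, hU₀def, Matrix.of_apply, hb, PiLp.toLp_apply]
    rw [this, htn]
    push_cast
    exact Finset.sum_congr rfl fun i _ => hterm i

private lemma matSqrt_spec (M : Matrix n n ℂ) (hM : M.PosSemidef) :
    (matSqrt M)ᴴ = matSqrt M ∧ matSqrt M * matSqrt M = M := by
  have hH : M.IsHermitian := hM.1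
  set V : Matrix n n ℂ := (hH.eigenvectorUnitary : Matrix n n ℂ) with hVdef
  have hVu : Vᴴ * V = 1 := by
    have := Matrix.mem_unitaryGroup_iff'.mp hH.eigenvectorUnitary.2
    rwa [Matrix.star_eq_conjTranspose] at this
  have hspec : M = V * diagonal (RCLike.ofReal ∘ hH.eigenvalues) * Vᴴ := by
    have := hH.spectral_theorem
    rw [Unitary.conjStarAlgAut_apply] at this
    exact this
  have hsq : matSqrt M = V * diagonal (RCLike.ofReal ∘ Real.sqrt ∘ hH.eigenvalues) * Vᴴ := by
    rw [matSqrt, dif_pos hM]; rfl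
  have hD : (diagonal (RCLike.ofReal ∘ Real.sqrt ∘ hH.eigenvalues) : Matrix n n ℂ)ᴴ =
      diagonal (RCLike.ofReal ∘ Real.sqrt ∘ hH.eigenvalues) := by
    rw [diagonal_conjTranspose]; congr 1; funext i; simp
  have hdd : diagonal (RCLike.ofReal ∘ Real.sqrt ∘ hH.eigenvalues) *
      diagonal (RCLike.ofReal ∘ Real.sqrt ∘ hH.eigenvalues) =
      (diagonal (RCLike.ofReal ∘ hH.eigenvalues) : Matrix n n ℂ) := by
    rw [diagonal_mul_diagonal]; congr 1; funext i
    simp only [Function.comp_apply]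
    rw [← RCLike.ofReal_mul, Real.mul_self_sqrt (hM.eigenvalues_nonneg i)]
  rw [hsq]
  constructor
  · rw [conjTranspose_mul, conjTranspose_mul, conjTranspose_conjTranspose, hD, Matrix.mul_assoc]
  · conv_rhs => rw [hspec]
    calc _ = V * (diagonal (RCLike.ofReal ∘ Real.sqrt ∘ hH.eigenvalues) * (Vᴴ * V) *
              diagonal (RCLike.ofReal ∘ Real.sqrt ∘ hH.eigenvalues)) * Vᴴ := by
            simp only [Matrix.mul_assoc]
      _ = _ := by rw [hVu, Matrix.mul_one, hdd]

end Helpers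

theorem stmt12 {n : Type*} [Fintype n] [DecidableEq n]
    (ρ σ : Matrix n n ℂ) (hρ : ρ.PosSemidef) (hρ1 : ρ.trace = 1)
    (hσ : σ.PosSemidef) (hσ1 : σ.trace = 1) :
    fidelity ρ σ ^ 2 + traceDist ρ σ ^ 2 ≤ 1 ∧
    fidelity ρ σ ≤ Real.sqrt (1 - traceDist ρ σ ^ 2) := by
  classical
  set R : Matrix n n ℂ := matSqrt ρ with hRdef
  set S : Matrix n n ℂ := matSqrt σ with hSdef
  have hRH : Rᴴ = R := (matSqrt_spec ρ hρ).1
  have hSH : Sᴴ = S := (matSqrt_spec σ hσ).1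
  have hRR : R * R = ρ := (matSqrt_spec ρ hρ).2
  have hSS : S * S = σ := (matSqrt_spec σ hσ).2
  have hfid : fidelity ρ σ = traceNorm (R * S) := by
    rw [fidelity]
  set F : ℝ := fidelity ρ σ with hFdef
  obtain ⟨hF0, W, hWu, hWtr⟩ := exists_unitary_polar (R * S)
  rw [← hfid] at hWtr hF0
  have hWu' : W * Wᴴ = 1 := mul_eq_one_comm.mp hWu
  set X : Matrix n n ℂ := R with hXdef
  set Y : Matrix n n ℂ := Wᴴ * S with hYdef
  have hXh : Xᴴ = X := hRH
  have hYh : Yᴴ = S * W := by rw [hYdef, conjTranspose_mul, hSH, conjTranspose_conjTranspose]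
  have hXX : Xᴴ * X = ρ := by rw [hXh, hRR]
  have hYY : Yᴴ * Y = σ := by
    rw [hYh, hYdef, Matrix.mul_assoc, ← Matrix.mul_assoc W, hWu', Matrix.one_mul, hSS]
  have hYX : (Yᴴ * X).trace = (F : ℂ) := by
    rw [hYh, Matrix.mul_assoc, Matrix.trace_mul_comm, Matrix.mul_assoc]
    exact hWtr
  have hXY : (Xᴴ * Y).trace = (F : ℂ) := by
    have : Xᴴ * Y = (Yᴴ * X)ᴴ := by rw [conjTranspose_mul, conjTranspose_conjTranspose]
    rw [this, Matrix.trace_conjTranspose, hYX]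
    exact Complex.conj_ofReal F
  -- norms of X ± Y
  have hminus : ((X - Y)ᴴ * (X - Y)).trace.re = 2 - 2 * F := by
    rw [conjTranspose_sub, Matrix.sub_mul, Matrix.mul_sub, Matrix.mul_sub,
      Matrix.trace_sub, Matrix.trace_sub, Matrix.trace_sub, hXX, hYY, hXY, hYX, hρ1, hσ1]
    simp; ring
  have hplus : ((X + Y)ᴴ * (X + Y)).trace.re = 2 + 2 * F := by
    rw [conjTranspose_add, Matrix.add_mul, Matrix.mul_add, Matrix.mul_add,
      Matrix.trace_add, Matrix.trace_add, Matrix.trace_add, hXX, hYY, hXY, hYX, hρ1, hσ1]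
    simp; ring
  have hF1 : F ≤ 1 := by
    have := trace_re_nonneg (X - Y)
    rw [hminus] at this; linarith
  -- trace distance bound
  set t : ℝ := traceNorm (ρ - σ) with htdef
  obtain ⟨ht0, Z, hZu, hZtr⟩ := exists_unitary_polar (ρ - σ)
  rw [← htdef] at hZtr ht0
  have hZu' : Z * Zᴴ = 1 := mul_eq_one_comm.mp hZu
  have hsum : (X - Y)ᴴ * (X + Y) + (X + Y)ᴴ * (X - Y) = (ρ - σ) + (ρ - σ) := by
    rw [conjTranspose_sub, conjTranspose_add, ← hXX, ← hYY]
    noncomm_ring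
  -- bound each cross term
  have key : ∀ G H : Matrix n n ℂ,
      (Z * (Gᴴ * H)).trace.re ≤
        Real.sqrt ((Gᴴ * G).trace.re) * Real.sqrt ((Hᴴ * H).trace.re) := by
    intro G H
    have h1 : (Z * (Gᴴ * H)).trace = (Gᴴ * (H * Z)).trace := by
      rw [Matrix.trace_mul_comm, Matrix.mul_assoc]
    have h2 : ((H * Z)ᴴ * (H * Z)).trace = (Hᴴ * H).trace := by
      rw [conjTranspose_mul, Matrix.mul_assoc, ← Matrix.mul_assoc Hᴴ, ← Matrix.mul_assoc,
        Matrix.trace_mul_cycle, ← Matrix.mul_assoc, hZu', Matrix.one_mul]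
    calc (Z * (Gᴴ * H)).trace.re ≤ ‖(Z * (Gᴴ * H)).trace‖ := Complex.re_le_norm _
      _ = ‖(Gᴴ * (H * Z)).trace‖ := by rw [h1]
      _ ≤ Real.sqrt ((Gᴴ * G).trace.re) * Real.sqrt (((H * Z)ᴴ * (H * Z)).trace.re) :=
          cs_trace _ _
      _ = Real.sqrt ((Gᴴ * G).trace.re) * Real.sqrt ((Hᴴ * H).trace.re) := by rw [h2]
  have h2t : t + t ≤ 2 * (Real.sqrt (2 - 2 * F) * Real.sqrt (2 + 2 * F)) := by
    have htr : ((F : ℂ) = F) := rfl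
    have : ((t : ℂ) + t) = (Z * ((X - Y)ᴴ * (X + Y))).trace + (Z * ((X + Y)ᴴ * (X - Y))).trace := by
      rw [← Matrix.trace_add, ← Matrix.mul_add, hsum, Matrix.mul_add, Matrix.trace_add, hZtr]
    have hre : t + t = (Z * ((X - Y)ᴴ * (X + Y))).trace.re + (Z * ((X + Y)ᴴ * (X - Y))).trace.re := by
      have := congrArg Complex.re this
      simpa using this
    rw [hre]
    have k1 := key (X - Y) (X + Y)
    have k2 := key (X + Y) (X - Y)
    rw [hminus, hplus] at k1 k2
    linarith [k1, k2]
  have ht : t ≤ Real.sqrt (2 - 2 * F) * Real.sqrt (2 + 2 * F) := by linarith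
  have ht2 : t ^ 2 ≤ 4 - 4 * F ^ 2 := by
    have h4 : (Real.sqrt (2 - 2 * F) * Real.sqrt (2 + 2 * F)) ^ 2 = 4 - 4 * F ^ 2 := by
      rw [mul_pow, Real.sq_sqrt (by linarith), Real.sq_sqrt (by linarith [hF0])]
      ring
    calc t ^ 2 ≤ (Real.sqrt (2 - 2 * F) * Real.sqrt (2 + 2 * F)) ^ 2 := by
          apply pow_le_pow_left₀ ht0 ht
      _ = 4 - 4 * F ^ 2 := h4
  have hD : traceDist ρ σ = t / 2 := by rw [traceDist, htdef]
  have hD2 : traceDist ρ σ ^ 2 ≤ 1 - F ^ 2 := by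
    rw [hD]; nlinarith
  constructor
  · linarith
  · rw [show F = Real.sqrt (F ^ 2) by rw [Real.sqrt_sq hF0]]
    exact Real.sqrt_le_sqrt (by linarith)
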